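/- (Decomposition of piecewise affine functions, Lemma 4.5.) Assume T_h^+ and T_h^- both have positive Lebesgue measure and let β^+, β^- > 0, x_P ∈ H, and t_1,…,t_{N−1}, n an orthonormal basis of ℝ^N. Then every function z on T of the form z|_{T_h^±} = z^±|_{T_h^±} with z^± : ℝ^N → ℝ affine admits the decomposition z = a Ψ_T + b Υ_T + Σ_{i=1}^{N−1} c_i Θ_{i,T} + Σ_{i=1}^{N+1} g_i φ_{i,T}, where a = z^+(x_P) − z^-(x_P), b = β^+∇z^+·n − β^-∇z^-·n, c_i = (∇z^+ − ∇z^-)·t_i, and g_i = (1/|F_i|)∫_{F_i} z dH^{N−1}. -/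

import Mathlib

open MeasureTheory Metric Set
open scoped RealInnerProductSpace

noncomputable section

/-- Euclidean space `ℝ^N`. -/
abbrev Euc (N : ℕ) := EuclideanSpace ℝ (Fin N)

/-- The average of `f` over a set `S` with respect to the `(N-1)`-dimensional
Hausdorff measure: `(1/|S|) ∫_S f dH^{N-1}`. -/
noncomputable def faceAvg {N : ℕ} (S : Set (Euc N)) (f : Euc N → ℝ) : ℝ :=
  (μH[(N : ℝ) - 1] S).toReal⁻¹ * ∫ x in S, f x ∂(μH[(N : ℝ) - 1])

/-- Evaluation of the affine function with gradient `p.1` and constant `p.2`. -/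
noncomputable def affEval {N : ℕ} (p : Euc N × ℝ) (x : Euc N) : ℝ := ⟪p.1, x⟫ + p.2

/-- The function equal to `fp` on the positive side of the hyperplane through `x₀`
with normal `nv`, and to `fm` elsewhere. -/
noncomputable def pwFun {N : ℕ} (x₀ nv : Euc N) (fp fm : Euc N → ℝ) (x : Euc N) : ℝ :=
  if 0 < ⟪x - x₀, nv⟫ then fp x else fm x

/-- Membership in the IFE shape function space `S_h(T)`. -/
def IsIFEFun {N : ℕ} (x₀ nv : Euc N) (Hpl : Set (Euc N)) (βp βm : ℝ)
    (φ : Euc N → ℝ) : Prop :=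
  ∃ p m : Euc N × ℝ,
    (∀ x ∈ Hpl, affEval p x = affEval m x) ∧
    βp * ⟪p.1, nv⟫ = βm * ⟪m.1, nv⟫ ∧
    ∀ x, φ x = pwFun x₀ nv (affEval p) (affEval m) x

/-- The defining conditions of the auxiliary functions of Lemma 4.4. -/
def AuxCond {N : ℕ} (F : Fin (N + 1) → Set (Euc N)) (x₀ nv xP : Euc N)
    (t : Fin (N - 1) → Euc N) (βp βm a b : ℝ) (cv : Fin (N - 1) → ℝ)
    (p : (Euc N × ℝ) × (Euc N × ℝ)) : Prop :=
  (∀ j, faceAvg (F j) (pwFun x₀ nv (affEval p.1) (affEval p.2)) = 0) ∧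
  affEval p.1 xP - affEval p.2 xP = a ∧
  βp * ⟪p.1.1, nv⟫ - βm * ⟪p.2.1, nv⟫ = b ∧
  ∀ j, ⟪p.1.1 - p.2.1, t j⟫ = cv j

/-! The data `(a, b, c_i, g_i)` of a piecewise affine function are linear in the pair of affine
pieces `(z⁺, z⁻)`, and `Ψ_T, Υ_T, Θ_{i,T}, φ_{i,T}` are mapped by them to the standard basis of
`ℝ × ℝ × ℝ^{N-1} × ℝ^{N+1}`. This space and the space of pairs of affine functions on `ℝ^N` both
have dimension `2N + 2`, so the data map is a linear isomorphism, and `z` agrees with the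
combination of the auxiliary and basis functions having the same data. -/

theorem LinearMap.eq_of_rightInverse_of_finrank_eq {K V W : Type*} [DivisionRing K]
    [AddCommGroup V] [Module K V] [FiniteDimensional K V]
    [AddCommGroup W] [Module K W] [FiniteDimensional K W]
    {L : V →ₗ[K] W} (h : Module.finrank K V = Module.finrank K W) {g : W → V}
    (hg : Function.RightInverse g L) (z : V) : g (L z) = z :=
  (L.injective_iff_surjective_of_finrank_eq_finrank h).2 hg.surjective (hg (L z))

theorem LinearMap.map_combination_of_eq_single {R V ι κ : Type*} [Semiring R]
    [AddCommMonoid V] [Module R V] [Fintype ι] [DecidableEq ι] [Fintype κ] [DecidableEq κ]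
    (L : V →ₗ[R] R × R × (ι → R) × (κ → R)) {ψ υ : V} {θ : ι → V} {φ : κ → V}
    (hψ : L ψ = (1, 0, 0, 0)) (hυ : L υ = (0, 1, 0, 0))
    (hθ : ∀ i, L (θ i) = (0, 0, Pi.single i 1, 0))
    (hφ : ∀ k, L (φ k) = (0, 0, 0, Pi.single k 1))
    (a b : R) (c : ι → R) (g : κ → R) :
    L (a • ψ + b • υ + ∑ i, c i • θ i + ∑ k, g k • φ k) = (a, b, c, g) := by
  simp only [map_add, map_smul, map_sum, hψ, hυ, hθ, hφ]
  ext <;> simp [Prod.fst_sum, Prod.snd_sum, Finset.sum_apply, Pi.single_apply]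

section

variable {N : ℕ}

theorem faceAvg_add {S : Set (Euc N)} {f g : Euc N → ℝ}
    (hf : IntegrableOn f S μH[(N : ℝ) - 1]) (hg : IntegrableOn g S μH[(N : ℝ) - 1]) :
    faceAvg S (f + g) = faceAvg S f + faceAvg S g := by
  simp only [faceAvg, Pi.add_apply, integral_add hf hg, mul_add]

theorem faceAvg_const_mul (S : Set (Euc N)) (c : ℝ) (f : Euc N → ℝ) :
    faceAvg S (fun x => c * f x) = c * faceAvg S f := by
  simp only [faceAvg, integral_const_mul]
  ring

theorem measure_ne_top_of_faceAvg_ne_zero {S : Set (Euc N)} {f : Euc N → ℝ}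
    (h : faceAvg S f ≠ 0) : μH[(N : ℝ) - 1] S ≠ ⊤ := by
  contrapose! h
  simp [faceAvg, h]

theorem continuous_affEval (p : Euc N × ℝ) : Continuous (affEval p) := by
  unfold affEval
  fun_prop

theorem integrableOn_pwFun {μ : Measure (Euc N)} {K : Set (Euc N)} (hK : IsCompact K)
    (hμK : μ K ≠ ⊤) (x₀ nv : Euc N) {fp fm : Euc N → ℝ} (hfp : Continuous fp)
    (hfm : Continuous fm) : IntegrableOn (pwFun x₀ nv fp fm) K μ := by
  obtain ⟨C, hC⟩ := hK.exists_bound_of_continuousOn (hfp.norm.add hfm.norm).continuousOn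
  have hmeas : Measurable (pwFun x₀ nv fp fm) :=
    Measurable.ite (measurableSet_lt measurable_const (by fun_prop)) hfp.measurable
      hfm.measurable
  refine Measure.integrableOn_of_bounded hμK hmeas.aestronglyMeasurable (M := C) ?_
  filter_upwards [ae_restrict_mem hK.measurableSet] with x hxK
  have hbound : ‖fp x‖ + ‖fm x‖ ≤ C := (Real.le_norm_self _).trans (hC x hxK)
  unfold pwFun
  split_ifs <;> linarith [norm_nonneg (fp x), norm_nonneg (fm x)]

theorem inner_sub_eq_zero_of_eqOn_hyperplane {x₀ nv τ : Euc N} {p q : Euc N × ℝ}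
    (hpq : ∀ x, ⟪x - x₀, nv⟫ = 0 → affEval p x = affEval q x) (hτ : ⟪τ, nv⟫ = 0) :
    ⟪p.1 - q.1, τ⟫ = 0 := by
  have h₀ := hpq x₀ (by simp)
  have h₁ := hpq (x₀ + τ) (by simpa using hτ)
  simp only [affEval, inner_add_right] at h₀ h₁
  rw [inner_sub_left]
  linarith

abbrev PwAffine (N : ℕ) := (Euc N × ℝ) × (Euc N × ℝ)

/-- The data `(a, b, (c_i), (g_i))` of a piecewise affine function. -/
abbrev DofSpace (N : ℕ) := ℝ × ℝ × (Fin (N - 1) → ℝ) × (Fin (N + 1) → ℝ)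

theorem finrank_pwAffine_eq_finrank_dofSpace (hN : 1 ≤ N) :
    Module.finrank ℝ (PwAffine N) = Module.finrank ℝ (DofSpace N) := by
  simp only [Module.finrank_prod, finrank_euclideanSpace_fin, Module.finrank_self,
    Module.finrank_fintype_fun_eq_card, Fintype.card_fin]
  omega

end

namespace PwAffine

variable {N : ℕ}

def eval (x₀ nv x : Euc N) : PwAffine N →ₗ[ℝ] ℝ where
  toFun p := pwFun x₀ nv (affEval p.1) (affEval p.2) x
  map_add' p q := by
    simp only [pwFun, affEval, Prod.fst_add, Prod.snd_add, inner_add_left]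
    split_ifs <;> ring
  map_smul' c p := by
    simp only [pwFun, affEval, Prod.smul_fst, Prod.smul_snd, real_inner_smul_left,
      smul_eq_mul, RingHom.id_apply]
    split_ifs <;> ring

theorem eval_apply (x₀ nv x : Euc N) (p : PwAffine N) :
    eval x₀ nv x p = pwFun x₀ nv (affEval p.1) (affEval p.2) x := rfl

def valueJump (xP : Euc N) : PwAffine N →ₗ[ℝ] ℝ where
  toFun p := affEval p.1 xP - affEval p.2 xP
  map_add' p q := by
    simp only [affEval, Prod.fst_add, Prod.snd_add, inner_add_left]
    ring
  map_smul' c p := by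
    simp only [affEval, Prod.smul_fst, Prod.smul_snd, real_inner_smul_left, smul_eq_mul,
      RingHom.id_apply]
    ring

def fluxJump (nv : Euc N) (βp βm : ℝ) : PwAffine N →ₗ[ℝ] ℝ where
  toFun p := βp * ⟪p.1.1, nv⟫ - βm * ⟪p.2.1, nv⟫
  map_add' p q := by
    simp only [Prod.fst_add, Prod.snd_add, inner_add_left]
    ring
  map_smul' c p := by
    simp only [Prod.smul_fst, Prod.smul_snd, real_inner_smul_left, smul_eq_mul, RingHom.id_apply]
    ring

def gradJump (τ : Euc N) : PwAffine N →ₗ[ℝ] ℝ where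
  toFun p := ⟪p.1.1 - p.2.1, τ⟫
  map_add' p q := by
    simp only [Prod.fst_add, Prod.snd_add, inner_sub_left, inner_add_left]
    ring
  map_smul' c p := by
    simp only [Prod.smul_fst, Prod.smul_snd, inner_sub_left, real_inner_smul_left, smul_eq_mul,
      RingHom.id_apply]
    ring

def faceAvgₗ (x₀ nv : Euc N) (S : Set (Euc N)) (hS : IsCompact S)
    (hμS : μH[(N : ℝ) - 1] S ≠ ⊤) : PwAffine N →ₗ[ℝ] ℝ where
  toFun p := faceAvg S (pwFun x₀ nv (affEval p.1) (affEval p.2))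
  map_add' p q := by
    have hint (r : PwAffine N) := integrableOn_pwFun hS hμS x₀ nv (continuous_affEval r.1)
      (continuous_affEval r.2)
    rw [← faceAvg_add (hint p) (hint q)]
    exact congrArg _ (funext fun x => map_add (eval x₀ nv x) p q)
  map_smul' c p := by
    rw [RingHom.id_apply, smul_eq_mul, ← faceAvg_const_mul]
    exact congrArg _ (funext fun x => map_smul (eval x₀ nv x) c p)

variable (F : Fin (N + 1) → Set (Euc N)) (hF : ∀ j, IsCompact (F j))
  (hμF : ∀ j, μH[(N : ℝ) - 1] (F j) ≠ ⊤) (x₀ nv xP : Euc N) (t : Fin (N - 1) → Euc N)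
  (βp βm : ℝ)

def dofs : PwAffine N →ₗ[ℝ] DofSpace N :=
  (valueJump xP).prod <| (fluxJump nv βp βm).prod <|
    (LinearMap.pi fun j => gradJump (t j)).prod
      (LinearMap.pi fun j => faceAvgₗ x₀ nv (F j) (hF j) (hμF j))

variable {F hF hμF x₀ nv xP t βp βm}

theorem dofs_eq_of_auxCond {a b : ℝ} {c : Fin (N - 1) → ℝ} {p : PwAffine N}
    (h : AuxCond F x₀ nv xP t βp βm a b c p) : dofs F hF hμF x₀ nv xP t βp βm p = (a, b, c, 0) :=
  Prod.ext h.2.1 (Prod.ext h.2.2.1 (Prod.ext (funext h.2.2.2) (funext h.1)))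

theorem dofs_eq_of_continuous_of_flux (hxP : ⟪xP - x₀, nv⟫ = 0) (ht : ∀ j, ⟪t j, nv⟫ = 0)
    {p m : Euc N × ℝ} (hcont : ∀ x, ⟪x - x₀, nv⟫ = 0 → affEval p x = affEval m x)
    (hflux : βp * ⟪p.1, nv⟫ = βm * ⟪m.1, nv⟫) :
    dofs F hF hμF x₀ nv xP t βp βm (p, m) =
      (0, 0, 0, fun j => faceAvg (F j) (pwFun x₀ nv (affEval p) (affEval m))) := by
  refine Prod.ext (sub_eq_zero.2 (hcont xP hxP)) (Prod.ext (sub_eq_zero.2 hflux) ?_)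
  exact Prod.ext (funext fun j => inner_sub_eq_zero_of_eqOn_hyperplane hcont (ht j)) rfl

end PwAffine

theorem statement9_general
    (N : ℕ) (hN : N = 2 ∨ N = 3)
    (v : Fin (N + 1) → Euc N)
    (Tset : Set (Euc N))
    (F : Fin (N + 1) → Set (Euc N))
    (hF : ∀ i, F i = convexHull ℝ (v '' ({i}ᶜ : Set (Fin (N + 1)))))
    (nv x₀ : Euc N)
    (Hpl : Set (Euc N)) (hH : Hpl = {x | ⟪x - x₀, nv⟫ = 0})
    (βp βm : ℝ)
    (xP : Euc N) (hxP : xP ∈ Hpl)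
    (t : Fin (N - 1) → Euc N)
    (ht3 : ∀ j, ⟪t j, nv⟫ = 0)
    -- the IFE basis functions φ_{i,T}, given through their affine pieces
    (φb : Fin (N + 1) → Euc N → ℝ)
    (hφb : ∀ i, IsIFEFun x₀ nv Hpl βp βm (φb i) ∧
      ∀ j, faceAvg (F j) (φb i) = if i = j then (1 : ℝ) else 0)
    -- the auxiliary functions Ψ_T, Υ_T, Θ_{i,T}
    (pΨ : (Euc N × ℝ) × (Euc N × ℝ))
    (hΨ : AuxCond F x₀ nv xP t βp βm 1 0 (fun _ => 0) pΨ)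
    (pΥ : (Euc N × ℝ) × (Euc N × ℝ))
    (hΥ : AuxCond F x₀ nv xP t βp βm 0 1 (fun _ => 0) pΥ)
    (pΘ : Fin (N - 1) → (Euc N × ℝ) × (Euc N × ℝ))
    (hΘ : ∀ i, AuxCond F x₀ nv xP t βp βm 0 0 (fun j => if i = j then 1 else 0) (pΘ i))
    -- an arbitrary piecewise affine function z, with pieces z⁺ = pz.1, z⁻ = pz.2
    (pz : (Euc N × ℝ) × (Euc N × ℝ))
    (a b : ℝ) (cvec : Fin (N - 1) → ℝ) (gvec : Fin (N + 1) → ℝ)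
    (ha : a = affEval pz.1 xP - affEval pz.2 xP)
    (hb : b = βp * ⟪pz.1.1, nv⟫ - βm * ⟪pz.2.1, nv⟫)
    (hc : ∀ i, cvec i = ⟪pz.1.1 - pz.2.1, t i⟫)
    (hg : ∀ i, gvec i = faceAvg (F i) (pwFun x₀ nv (affEval pz.1) (affEval pz.2))) :
    ∀ x ∈ Tset,
      pwFun x₀ nv (affEval pz.1) (affEval pz.2) x =
        a * pwFun x₀ nv (affEval pΨ.1) (affEval pΨ.2) x +
        b * pwFun x₀ nv (affEval pΥ.1) (affEval pΥ.2) x +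
        (∑ i, cvec i * pwFun x₀ nv (affEval (pΘ i).1) (affEval (pΘ i).2) x) +
        ∑ i, gvec i * φb i x := by
  choose φp φm hφH hφflux hφeq using fun i => (hφb i).1
  subst hH
  have hFcpt (j) : IsCompact (F j) := hF j ▸ (toFinite _).isCompact_convexHull (𝕜 := ℝ)
  -- on a face of infinite measure every average takes the junk value `0`, not `1`
  have hμF (j) : μH[(N : ℝ) - 1] (F j) ≠ ⊤ :=
    measure_ne_top_of_faceAvg_ne_zero (f := φb j) (by simp [(hφb j).2 j])
  set L := PwAffine.dofs F hFcpt hμF x₀ nv xP t βp βm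
  have hLΘ (i) : L (pΘ i) = (0, 0, Pi.single i 1, 0) :=
    (PwAffine.dofs_eq_of_auxCond (hΘ i)).trans (by simp [funext_iff, Pi.single_apply, eq_comm])
  have hLφ (i) : L (φp i, φm i) = (0, 0, 0, Pi.single i 1) := by
    rw [PwAffine.dofs_eq_of_continuous_of_flux hxP ht3 (hφH i) (hφflux i), ← funext (hφeq i)]
    simp [funext_iff, (hφb i).2, Pi.single_apply, eq_comm]
  have hLz : L pz = (a, b, cvec, gvec) :=
    Prod.ext ha.symm (Prod.ext hb.symm (Prod.ext (funext (hc · |>.symm)) (funext (hg · |>.symm))))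
  have hdecomp := L.eq_of_rightInverse_of_finrank_eq
    (finrank_pwAffine_eq_finrank_dofSpace (by omega))
    (g := fun d => d.1 • pΨ + d.2.1 • pΥ + ∑ i, d.2.2.1 i • pΘ i + ∑ i, d.2.2.2 i • (φp i, φm i))
    (fun d => L.map_combination_of_eq_single (PwAffine.dofs_eq_of_auxCond hΨ)
      (PwAffine.dofs_eq_of_auxCond hΥ) hLΘ hLφ _ _ _ _) pz
  intro x _
  have hzx := congrArg (PwAffine.eval x₀ nv x) hdecomp
  simp only [hLz, map_add, map_smul, map_sum, PwAffine.eval_apply, smul_eq_mul] at hzx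
  simp only [hφeq]
  exact hzx.symm

/-- Lemma 4.5 (decomposition of piecewise affine functions): every piecewise affine
`z` decomposes as `z = a Ψ_T + b Υ_T + Σ c_i Θ_{i,T} + Σ g_i φ_{i,T}` on `T`, with
`a = z⁺(x_P) - z⁻(x_P)`, `b = β⁺∇z⁺·n - β⁻∇z⁻·n`, `c_i = (∇z⁺ - ∇z⁻)·t_i`,
`g_i = (1/|F_i|)∫_{F_i} z`. -/
theorem statement9
    (N : ℕ) (hN : N = 2 ∨ N = 3)
    (v : Fin (N + 1) → Euc N) (hv : AffineIndependent ℝ v)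
    (Tset : Set (Euc N)) (hTset : Tset = convexHull ℝ (Set.range v))
    (F : Fin (N + 1) → Set (Euc N))
    (hF : ∀ i, F i = convexHull ℝ (v '' ({i}ᶜ : Set (Fin (N + 1)))))
    (nv x₀ : Euc N) (hn : ‖nv‖ = 1)
    (Hpl : Set (Euc N)) (hH : Hpl = {x | ⟪x - x₀, nv⟫ = 0})
    (Tplus Tminus : Set (Euc N))
    (hTplus : Tplus = {x ∈ Tset | 0 < ⟪x - x₀, nv⟫})
    (hTminus : Tminus = {x ∈ Tset | ⟪x - x₀, nv⟫ < 0})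
    (hvolp : 0 < volume Tplus) (hvolm : 0 < volume Tminus)
    (βp βm : ℝ) (hβp : 0 < βp) (hβm : 0 < βm)
    (xP : Euc N) (hxP : xP ∈ Hpl)
    (t : Fin (N - 1) → Euc N)
    (ht1 : ∀ j, ‖t j‖ = 1)
    (ht2 : ∀ j k, j ≠ k → ⟪t j, t k⟫ = 0)
    (ht3 : ∀ j, ⟪t j, nv⟫ = 0)
    -- the IFE basis functions φ_{i,T}, given through their affine pieces
    (φb : Fin (N + 1) → Euc N → ℝ)
    (hφb : ∀ i, IsIFEFun x₀ nv Hpl βp βm (φb i) ∧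
      ∀ j, faceAvg (F j) (φb i) = if i = j then (1 : ℝ) else 0)
    -- the auxiliary functions Ψ_T, Υ_T, Θ_{i,T}
    (pΨ : (Euc N × ℝ) × (Euc N × ℝ))
    (hΨ : AuxCond F x₀ nv xP t βp βm 1 0 (fun _ => 0) pΨ)
    (pΥ : (Euc N × ℝ) × (Euc N × ℝ))
    (hΥ : AuxCond F x₀ nv xP t βp βm 0 1 (fun _ => 0) pΥ)
    (pΘ : Fin (N - 1) → (Euc N × ℝ) × (Euc N × ℝ))
    (hΘ : ∀ i, AuxCond F x₀ nv xP t βp βm 0 0 (fun j => if i = j then 1 else 0) (pΘ i))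
    -- an arbitrary piecewise affine function z, with pieces z⁺ = pz.1, z⁻ = pz.2
    (pz : (Euc N × ℝ) × (Euc N × ℝ))
    (a b : ℝ) (cvec : Fin (N - 1) → ℝ) (gvec : Fin (N + 1) → ℝ)
    (ha : a = affEval pz.1 xP - affEval pz.2 xP)
    (hb : b = βp * ⟪pz.1.1, nv⟫ - βm * ⟪pz.2.1, nv⟫)
    (hc : ∀ i, cvec i = ⟪pz.1.1 - pz.2.1, t i⟫)
    (hg : ∀ i, gvec i = faceAvg (F i) (pwFun x₀ nv (affEval pz.1) (affEval pz.2))) :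
    ∀ x ∈ Tset,
      pwFun x₀ nv (affEval pz.1) (affEval pz.2) x =
        a * pwFun x₀ nv (affEval pΨ.1) (affEval pΨ.2) x +
        b * pwFun x₀ nv (affEval pΥ.1) (affEval pΥ.2) x +
        (∑ i, cvec i * pwFun x₀ nv (affEval (pΘ i).1) (affEval (pΘ i).2) x) +
        ∑ i, gvec i * φb i x :=
  statement9_general N hN v Tset F hF nv x₀ Hpl hH βp βm xP hxP t ht3 φb hφb pΨ hΨ pΥ hΥ pΘ hΘ pz a
    b cvec gvec ha hb hc hg
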